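/- arXiv:2203.02525 — 4 statements merged into one kernel-verified Lean document; each statement's English description precedes it below -/
import Mathlib

section
/- For any diagonal matrix X in M_d(ℝ) (or M_d(ℂ) with real diagonal entries), there exists a diagonal matrix Y with Y² = 1 such that ‖X - Y‖_f ≤ (1 + 1/√2)·‖X² - 1‖_f. -/
open Matrix

/-- The little Frobenius (normalized Hilbert–Schmidt) norm for real matrices. -/
noncomputable def littleFrobR {d : ℕ} (A : Matrix (Fin d) (Fin d) ℝ) : ℝ :=
  Real.sqrt ((Aᵀ * A).trace / d)

def unitSign {α : Type*} [Ring α] [LinearOrder α] (x : α) : α :=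
  if 0 ≤ x then 1 else -1

theorem unitSign_mul_self {α : Type*} [Ring α] [LinearOrder α] (x : α) :
    unitSign x * unitSign x = 1 := by
  unfold unitSign
  split_ifs <;> simp

/-- `(x² - 1)² - (x ∓ 1)² = (x ∓ 1)² x (x ± 2)`, which is nonnegative for `±x ≥ 0`. -/
theorem sub_unitSign_mul_self_le {α : Type*} [CommRing α] [LinearOrder α]
    [IsStrictOrderedRing α] (x : α) :
    (x - unitSign x) * (x - unitSign x) ≤ (x * x - 1) * (x * x - 1) := by
  unfold unitSign
  split_ifs with hx
  · nlinarith [mul_nonneg (mul_self_nonneg (x - 1))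
      (mul_nonneg hx (by linarith : (0 : α) ≤ x + 2))]
  · have hx : x < 0 := not_le.mp hx
    nlinarith [mul_nonneg (mul_self_nonneg (x + 1))
      (mul_nonneg_of_nonpos_of_nonpos hx.le (by linarith : x - 2 ≤ 0))]

theorem littleFrobR_diagonal {d : ℕ} (a : Fin d → ℝ) :
    littleFrobR (diagonal a) = Real.sqrt ((∑ i, a i * a i) / d) := by
  simp [littleFrobR, diagonal_transpose, diagonal_mul_diagonal, trace_diagonal]

theorem littleFrobR_diagonal_le_of_mul_self_le {d : ℕ} {a b : Fin d → ℝ}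
    (h : ∀ i, a i * a i ≤ b i * b i) :
    littleFrobR (diagonal a) ≤ littleFrobR (diagonal b) := by
  rw [littleFrobR_diagonal, littleFrobR_diagonal]
  exact Real.sqrt_le_sqrt <| div_le_div_of_nonneg_right
    (Finset.sum_le_sum fun i _ => h i) d.cast_nonneg

/-- For any diagonal matrix `X` with real entries there is a diagonal matrix `Y` with
`Y² = 1` and `‖X - Y‖_f ≤ (1 + 1/√2)·‖X² - 1‖_f`. -/
theorem stmt2 {d : ℕ} (v : Fin d → ℝ) :
    ∃ w : Fin d → ℝ,
      (Matrix.diagonal w) * (Matrix.diagonal w) = 1 ∧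
      littleFrobR (Matrix.diagonal v - Matrix.diagonal w) ≤
        (1 + 1 / Real.sqrt 2) *
          littleFrobR ((Matrix.diagonal v) * (Matrix.diagonal v) - 1) := by
  refine ⟨fun i => unitSign (v i), ?_, ?_⟩
  · simp only [diagonal_mul_diagonal, unitSign_mul_self, diagonal_one]
  · rw [diagonal_sub, diagonal_mul_diagonal, ← diagonal_one, diagonal_sub]
    calc littleFrobR (diagonal (v - fun i => unitSign (v i)))
        ≤ littleFrobR (diagonal (fun i => v i * v i - 1)) :=
          littleFrobR_diagonal_le_of_mul_self_le fun i => sub_unitSign_mul_self_le (v i)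
      _ ≤ _ := le_mul_of_one_le_left (Real.sqrt_nonneg _) (by simp)
end

section
/- Let X in M_d(ℂ) satisfy ‖X‖_op ≤ C, ‖X - X*‖_f ≤ ε, and ‖X² - 1‖_f ≤ ε. Then there exists a self-adjoint unitary Z (i.e., Z* = Z and Z² = 1) such that ‖Z - X‖_f ≤ ((1 + 1/√2)(C+1) + 1/2)·ε. -/
/-!
Replace `X` by its real part `Y = (X + X*)/2`. Then `‖Y - X‖_f = ‖X - X*‖_f / 2 ≤ ε/2`, and
`Y² - 1 = Y(Y - X) + (Y - X)X + (X² - 1)` together with `‖AB‖_f ≤ ‖A‖_op ‖B‖_f` gives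
`‖Y² - 1‖_f ≤ (C + 1)ε`. The functional calculus turns `Y` into the self-adjoint unitary
`Z = sign(Y)`, and the scalar inequality `|sign t - t| ≤ |t² - 1|` on the spectrum of `Y` gives
`‖Z - Y‖_f ≤ ‖Y² - 1‖_f`. Altogether `‖Z - X‖_f ≤ (C + 3/2)ε`, which is below the claimed bound.
-/

open Matrix

noncomputable def littleFrob {d : ℕ} (A : Matrix (Fin d) (Fin d) ℂ) : ℝ :=
  Real.sqrt ((Aᴴ * A).trace.re / d)

noncomputable def matOpNorm {d : ℕ} (A : Matrix (Fin d) (Fin d) ℂ) : ℝ :=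
  ‖Matrix.toEuclideanCLM (𝕜 := ℂ) (n := Fin d) A‖

open scoped MatrixOrder ComplexOrder ComplexStarModule

lemma Matrix.re_trace_mono {n : Type*} [Fintype n] {A B : Matrix n n ℂ} (h : A ≤ B) :
    A.trace.re ≤ B.trace.re :=
  (Complex.le_def.mp ((tracePositiveLinearMap n ℝ ℂ).mono h)).1

section Frobenius

attribute [local instance] Matrix.frobeniusNormedAddCommGroup Matrix.frobeniusNormedSpace

lemma Matrix.frobenius_norm_eq_sqrt_re_trace {n : Type*} [Fintype n] (A : Matrix n n ℂ) :
    ‖A‖ = √(Aᴴ * A).trace.re := by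
  rw [frobenius_norm_def, ← Real.sqrt_eq_rpow]
  simp only [trace, diag, mul_apply, conjTranspose_apply, Complex.re_sum, Real.rpow_two]
  rw [Finset.sum_comm]
  simp [Complex.sq_norm, Complex.normSq_apply]

variable {d : ℕ}

lemma littleFrob_nonneg (A : Matrix (Fin d) (Fin d) ℂ) : 0 ≤ littleFrob A :=
  Real.sqrt_nonneg _

lemma littleFrob_eq_norm_div (A : Matrix (Fin d) (Fin d) ℂ) : littleFrob A = ‖A‖ / √d := by
  rw [littleFrob, frobenius_norm_eq_sqrt_re_trace, Real.sqrt_div' _ d.cast_nonneg]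

lemma littleFrob_add_le (A B : Matrix (Fin d) (Fin d) ℂ) :
    littleFrob (A + B) ≤ littleFrob A + littleFrob B := by
  simp only [littleFrob_eq_norm_div, ← add_div]
  gcongr
  exact norm_add_le A B

lemma littleFrob_conjTranspose (A : Matrix (Fin d) (Fin d) ℂ) : littleFrob Aᴴ = littleFrob A := by
  rw [littleFrob_eq_norm_div, littleFrob_eq_norm_div, frobenius_norm_conjTranspose]

lemma littleFrob_smul (c : ℝ) (A : Matrix (Fin d) (Fin d) ℂ) :
    littleFrob (c • A) = |c| * littleFrob A := by
  rw [littleFrob_eq_norm_div, littleFrob_eq_norm_div, norm_smul, Real.norm_eq_abs, mul_div_assoc]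

end Frobenius

section L2Operator

open scoped Matrix.Norms.L2Operator

lemma Matrix.re_trace_conjTranspose_mul_mul_le {n : Type*} [Fintype n] [DecidableEq n]
    (A B : Matrix n n ℂ) : ((A * B)ᴴ * (A * B)).trace.re ≤ ‖A‖ ^ 2 * (Bᴴ * B).trace.re := by
  have h := star_left_conjugate_le_conjugate
    (CStarAlgebra.star_mul_le_algebraMap_norm_sq (a := A)) B
  rw [Algebra.algebraMap_eq_smul_one, mul_smul_comm, mul_one, smul_mul_assoc] at h
  simpa only [trace_smul, Complex.smul_re, star_eq_conjTranspose, conjTranspose_mul,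
    Matrix.mul_assoc, smul_eq_mul] using re_trace_mono h

variable {d : ℕ}

lemma matOpNorm_eq_norm (A : Matrix (Fin d) (Fin d) ℂ) : matOpNorm A = ‖A‖ := rfl

lemma littleFrob_mul_le_left (A B : Matrix (Fin d) (Fin d) ℂ) :
    littleFrob (A * B) ≤ matOpNorm A * littleFrob B := by
  calc littleFrob (A * B) ≤ √(‖A‖ ^ 2 * (Bᴴ * B).trace.re / d) := by
        unfold littleFrob
        gcongr √(?_ / _)
        exact re_trace_conjTranspose_mul_mul_le A B
    _ = matOpNorm A * littleFrob B := by
        rw [mul_div_assoc, Real.sqrt_mul (by positivity), Real.sqrt_sq (norm_nonneg A)]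
        rfl

lemma littleFrob_mul_le_right (A B : Matrix (Fin d) (Fin d) ℂ) :
    littleFrob (A * B) ≤ littleFrob A * matOpNorm B := by
  rw [← littleFrob_conjTranspose, conjTranspose_mul, ← littleFrob_conjTranspose A, mul_comm,
    matOpNorm_eq_norm, ← norm_star B]
  exact littleFrob_mul_le_left _ _

lemma littleFrob_mul_self_sub_one_le (X Y : Matrix (Fin d) (Fin d) ℂ) :
    littleFrob (Y * Y - 1) ≤
      matOpNorm Y * littleFrob (Y - X) + littleFrob (Y - X) * matOpNorm X +
        littleFrob (X * X - 1) := by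
  calc littleFrob (Y * Y - 1) = littleFrob (Y * (Y - X) + (Y - X) * X + (X * X - 1)) := by
        congr 1; noncomm_ring
    _ ≤ _ := by
      grw [littleFrob_add_le, littleFrob_add_le, littleFrob_mul_le_left, littleFrob_mul_le_right]

lemma matOpNorm_realPart_le (X : Matrix (Fin d) (Fin d) ℂ) :
    matOpNorm (ℜ X : Matrix (Fin d) (Fin d) ℂ) ≤ matOpNorm X :=
  realPart.norm_le X

lemma littleFrob_realPart_sub (X : Matrix (Fin d) (Fin d) ℂ) :
    littleFrob ((ℜ X : Matrix (Fin d) (Fin d) ℂ) - X) = littleFrob (X - Xᴴ) / 2 := by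
  have h : (ℜ X : Matrix (Fin d) (Fin d) ℂ) - X = (2⁻¹ : ℝ) • (X - Xᴴ)ᴴ := by
    rw [realPart_apply_coe, conjTranspose_sub, conjTranspose_conjTranspose, star_eq_conjTranspose]
    module
  rw [h, littleFrob_smul, littleFrob_conjTranspose, abs_of_pos (by norm_num), inv_mul_eq_div]

lemma littleFrob_cfc_le {A : Matrix (Fin d) (Fin d) ℂ} {f g : ℝ → ℝ}
    (h : ∀ x ∈ spectrum ℝ A, |f x| ≤ |g x|) : littleFrob (cfc f A) ≤ littleFrob (cfc g A) := by
  have hcont (k : ℝ → ℝ) : ContinuousOn k (spectrum ℝ A) := A.finite_real_spectrum.continuousOn k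
  have hsq (k : ℝ → ℝ) : (cfc k A)ᴴ * cfc k A = cfc (fun x => k x * k x) A := by
    rw [← star_eq_conjTranspose, (cfc_predicate k A : IsSelfAdjoint _).star_eq,
      cfc_mul k k A (hcont k) (hcont k)]
  rw [littleFrob, littleFrob, hsq, hsq]
  gcongr √(?_ / _)
  refine re_trace_mono (cfc_mono (fun x hx => ?_) (hcont _) (hcont _))
  simpa only [← sq, sq_le_sq] using h x hx

end L2Operator

lemma abs_ite_sub_le_abs_sq_sub_one (t : ℝ) :
    |(if 0 ≤ t then 1 else -1) - t| ≤ |t ^ 2 - 1| := by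
  rw [← sq_le_sq]
  split_ifs with ht
  · nlinarith [mul_nonneg (sq_nonneg (t - 1)) (mul_nonneg ht (by linarith : 0 ≤ t + 2))]
  · nlinarith [mul_nonneg (sq_nonneg (t + 1))
      (mul_nonneg (by linarith : 0 ≤ -t) (by linarith : 0 ≤ 2 - t))]

lemma exists_involution_littleFrob_sub_le {d : ℕ} {Y : Matrix (Fin d) (Fin d) ℂ}
    (hY : IsSelfAdjoint Y) :
    ∃ Z : Matrix (Fin d) (Fin d) ℂ, Zᴴ = Z ∧ Z * Z = 1 ∧
      littleFrob (Z - Y) ≤ littleFrob (Y * Y - 1) := by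
  -- not `Real.sign`, which vanishes at `0`
  set s : ℝ → ℝ := fun t => if 0 ≤ t then 1 else -1
  have hcont (k : ℝ → ℝ) : ContinuousOn k (spectrum ℝ Y) := Y.finite_real_spectrum.continuousOn k
  refine ⟨cfc s Y, (cfc_predicate s Y : IsSelfAdjoint _).star_eq, ?_, ?_⟩
  · rw [← cfc_mul s s Y (hcont s) (hcont s), ← cfc_one ℝ Y]
    refine cfc_congr fun t _ => ?_
    by_cases ht : 0 ≤ t <;> simp [s, ht]
  · have hZY : cfc s Y - Y = cfc (fun t => s t - t) Y := by
      rw [cfc_sub s (fun t => t) Y (hcont _) (hcont _), cfc_id' ℝ Y]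
    have hYY : Y * Y - 1 = cfc (fun t : ℝ => t ^ 2 - 1) Y := by
      rw [cfc_sub (· ^ 2) (fun _ => 1) Y (hcont _) (hcont _), cfc_pow_id Y 2, cfc_const_one ℝ Y,
        sq]
    rw [hZY, hYY]
    exact littleFrob_cfc_le fun t _ => abs_ite_sub_le_abs_sq_sub_one t

/-- If `‖X‖_op ≤ C`, `‖X - X*‖_f ≤ ε` and `‖X² - 1‖_f ≤ ε`, then there is a self-adjoint
unitary `Z` with `‖Z - X‖_f ≤ ((1 + 1/√2)(C+1) + 1/2)·ε`. -/
theorem stmt3 {d : ℕ} (X : Matrix (Fin d) (Fin d) ℂ) (C ε : ℝ)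
    (hC : matOpNorm X ≤ C)
    (hsa : littleFrob (X - Xᴴ) ≤ ε)
    (hsq : littleFrob (X * X - 1) ≤ ε) :
    ∃ Z : Matrix (Fin d) (Fin d) ℂ, Zᴴ = Z ∧ Z * Z = 1 ∧
      littleFrob (Z - X) ≤ ((1 + 1 / Real.sqrt 2) * (C + 1) + 1 / 2) * ε := by
  set Y : Matrix (Fin d) (Fin d) ℂ := ↑(ℜ X)
  obtain ⟨Z, hZ, hZZ, hZY⟩ := exists_involution_littleFrob_sub_le (ℜ X).2
  refine ⟨Z, hZ, hZZ, ?_⟩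
  have hε : 0 ≤ ε := (littleFrob_nonneg _).trans hsa
  have hC₀ : 0 ≤ C := (norm_nonneg _).trans hC
  have hYX : littleFrob (Y - X) ≤ ε / 2 := by
    rw [littleFrob_realPart_sub]; linarith
  have hYY : littleFrob (Y * Y - 1) ≤ (C + 1) * ε := by
    grw [littleFrob_mul_self_sub_one_le X Y, matOpNorm_realPart_le, hC, hYX, hsq]
    · linarith
    all_goals exact littleFrob_nonneg _
  calc littleFrob (Z - X) = littleFrob ((Z - Y) + (Y - X)) := by rw [sub_add_sub_cancel]
    _ ≤ (C + 1) * ε + ε / 2 := by grw [littleFrob_add_le, hZY, hYY, hYX]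
    _ ≤ ((1 + 1 / Real.sqrt 2) * (C + 1) + 1 / 2) * ε := by
      have : 0 ≤ 1 / Real.sqrt 2 * (C + 1) * ε := by positivity
      linarith
end

section
/- Let X and Y be self-adjoint unitary operators on a finite-dimensional Hilbert space H, let |ψ⟩ = Σ_t |t⟩ ⊗ λ|t⟩ ∈ H ⊗ H with λ positive semidefinite and tr(λ²) = 1. Then ‖Yλ − λX̄‖_F² = 2(1 − ⟨ψ| X ⊗ Y |ψ⟩). In particular ⟨ψ| X ⊗ Y |ψ⟩ ≥ 1 − ε if and only if ‖Yλ − λX̄‖_F² ≤ 2ε. -/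
/-!
Writing `X̄ = Xᵀ` (as `X` is self-adjoint), the vector `ψ` pairs with `X ⊗ Y` as
`⟨ψ| X ⊗ Y |ψ⟩ = tr(λ Y λ Xᵀ)`, which is exactly the cross term in the expansion of
`‖Yλ − λXᵀ‖_F²`. The two square terms equal `tr(λ²) = 1` by unitary invariance of the
Frobenius norm.
-/

open Matrix
open scoped Kronecker ComplexOrder

/-- The squared Frobenius norm `‖A‖_F² = tr(A*A)` (as a real number). -/
noncomputable def frobNormSq {d : ℕ} (A : Matrix (Fin d) (Fin d) ℂ) : ℝ :=
  (Aᴴ * A).trace.re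

namespace Matrix

variable {m n : Type*} [Fintype m] [Fintype n]

theorem star_dotProduct_kronecker_mulVec (X : Matrix m m ℂ) (Y : Matrix n n ℂ)
    (L : Matrix n m ℂ) :
    star (fun p : m × n => L p.2 p.1) ⬝ᵥ (X ⊗ₖ Y) *ᵥ (fun p => L p.2 p.1) =
      (Lᴴ * Y * L * Xᵀ).trace := by
  simp only [dotProduct, mulVec, trace, diag_apply, mul_apply, kroneckerMap_apply,
    Pi.star_apply, conjTranspose_apply, transpose_apply, Fintype.sum_prod_type, Finset.sum_mul,
    Finset.mul_sum]
  refine Finset.sum_congr rfl fun i _ => ?_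
  rw [Finset.sum_comm]
  refine Finset.sum_congr rfl fun k _ => ?_
  rw [Finset.sum_comm]
  exact Finset.sum_congr rfl fun j _ => Finset.sum_congr rfl fun l _ => by ring

omit [Fintype m] in
theorem map_star_eq_transpose_of_conjTranspose_eq {X : Matrix m m ℂ} (hX : Xᴴ = X) :
    X.map star = Xᵀ := by
  rw [← conjTranspose_transpose, hX]

end Matrix

theorem frobNormSq_sub {d : ℕ} (A B : Matrix (Fin d) (Fin d) ℂ) :
    frobNormSq (A - B) = frobNormSq A + frobNormSq B - 2 * (Aᴴ * B).trace.re := by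
  have hBA : (Bᴴ * A).trace = star (Aᴴ * B).trace := by
    rw [← trace_conjTranspose, conjTranspose_mul, conjTranspose_conjTranspose]
  simp only [frobNormSq, conjTranspose_sub, sub_mul, mul_sub, trace_sub, Complex.sub_re, hBA,
    Complex.star_def, Complex.conj_re]
  ring

theorem frobNormSq_unitary_mul {d : ℕ} {U : Matrix (Fin d) (Fin d) ℂ} (hU : Uᴴ * U = 1)
    (A : Matrix (Fin d) (Fin d) ℂ) : frobNormSq (U * A) = frobNormSq A := by
  rw [frobNormSq, conjTranspose_mul, mul_assoc, ← mul_assoc Uᴴ, hU, one_mul, frobNormSq]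

theorem frobNormSq_mul_unitary {d : ℕ} {U : Matrix (Fin d) (Fin d) ℂ} (hU : U * Uᴴ = 1)
    (A : Matrix (Fin d) (Fin d) ℂ) : frobNormSq (A * U) = frobNormSq A := by
  rw [frobNormSq, conjTranspose_mul, mul_assoc, trace_mul_comm, ← mul_assoc, mul_assoc, hU,
    mul_one, frobNormSq]

/-- If `X, Y` are self-adjoint unitaries, `λ ⪰ 0` with `tr(λ²) = 1`, and
`|ψ⟩ = Σ_t |t⟩ ⊗ λ|t⟩` (so `ψ(t,s) = λ_{s t}`), then
`‖Yλ − λX̄‖_F² = 2(1 − ⟨ψ|X⊗Y|ψ⟩)`; in particular `⟨ψ|X⊗Y|ψ⟩ ≥ 1 − ε` iff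
`‖Yλ − λX̄‖_F² ≤ 2ε`. -/
theorem stmt7 {d : ℕ} (X Y L : Matrix (Fin d) (Fin d) ℂ)
    (hX : Xᴴ = X) (hXu : X * X = 1) (hY : Yᴴ = Y) (hYu : Y * Y = 1)
    (hL : L.PosSemidef) (htr : (L * L).trace = 1) :
    frobNormSq (Y * L - L * X.map (starRingEnd ℂ)) =
        2 * (1 - (star (fun p : Fin d × Fin d => L p.2 p.1) ⬝ᵥ
          ((X ⊗ₖ Y).mulVec (fun p => L p.2 p.1))).re) ∧
      ∀ ε : ℝ,
        (1 - ε ≤ (star (fun p : Fin d × Fin d => L p.2 p.1) ⬝ᵥ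
            ((X ⊗ₖ Y).mulVec (fun p => L p.2 p.1))).re ↔
          frobNormSq (Y * L - L * X.map (starRingEnd ℂ)) ≤ 2 * ε) := by
  have hLh : Lᴴ = L := hL.1
  have hXbar : X.map (starRingEnd ℂ) = Xᵀ := map_star_eq_transpose_of_conjTranspose_eq hX
  have hXtu : Xᵀ * Xᵀᴴ = 1 := by
    rw [transpose_conjTranspose, map_star_eq_transpose_of_conjTranspose_eq hX, ← transpose_mul,
      hXu, transpose_one]
  have hLnorm : frobNormSq L = 1 := by rw [frobNormSq, hLh, htr, Complex.one_re]
  have hexpand : frobNormSq (Y * L - L * X.map (starRingEnd ℂ)) =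
      2 - 2 * (Lᴴ * Y * L * Xᵀ).trace.re := by
    rw [hXbar, frobNormSq_sub, frobNormSq_unitary_mul (by rw [hY, hYu]),
      frobNormSq_mul_unitary hXtu, hLnorm, conjTranspose_mul, hY]
    simp only [Matrix.mul_assoc]
    ring
  rw [hexpand, star_dotProduct_kronecker_mulVec]
  exact ⟨by ring, fun ε => by constructor <;> intro h <;> linarith⟩
end

section
/- Let λ and λ' be positive semidefinite operators on a finite-dimensional Hilbert space. Then ∫₀^∞ ‖χ_{≥√α}(λ) − χ_{≥√α}(λ')‖_F² dα ≤ ‖λ − λ'‖_F · ‖λ + λ'‖_F, where χ_{≥√α}(T) denotes the spectral projection of the self-adjoint operator T onto eigenvalues ≥ √α. -/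
open Matrix MeasureTheory
open scoped ComplexOrder

/-- The (unnormalized) Frobenius / Hilbert–Schmidt norm of a matrix. -/
noncomputable def frobNorm {d : ℕ} (A : Matrix (Fin d) (Fin d) ℂ) : ℝ :=
  Real.sqrt ((Aᴴ * A).trace.re)

/-- The spectral projection `χ_{≥c}(A)` of a Hermitian matrix `A` onto the span of the
eigenvectors with eigenvalue `≥ c`. -/
noncomputable def specProj {d : ℕ} {A : Matrix (Fin d) (Fin d) ℂ} (hA : A.IsHermitian)
    (c : ℝ) : Matrix (Fin d) (Fin d) ℂ :=
  (hA.eigenvectorUnitary : Matrix (Fin d) (Fin d) ℂ) *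
    Matrix.diagonal (fun i => if c ≤ hA.eigenvalues i then (1 : ℂ) else 0) *
    (star hA.eigenvectorUnitary : Matrix (Fin d) (Fin d) ℂ)

/-!
Write `λ = ∑ aᵢ |uᵢ⟩⟨uᵢ|` and `λ' = ∑ bⱼ |vⱼ⟩⟨vⱼ|`. For any functions `f, g`,
`‖f(λ) - g(λ')‖_F² = ∑ᵢⱼ |⟨uᵢ, vⱼ⟩|² |f(aᵢ) - g(bⱼ)|²`, so all three Hilbert–Schmidt norms in
the statement are `L²` norms with respect to one joint distribution `μ = ∑ᵢⱼ |⟨uᵢ, vⱼ⟩|² δ_(aᵢ, bⱼ)`.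
For `a, b ≥ 0`, `|𝟙[√α ≤ a] - 𝟙[√α ≤ b]|²` is the indicator of the `α` between `a²` and `b²`, so
the integral equals `∑ᵢⱼ μᵢⱼ |aᵢ² - bⱼ²| = ∑ᵢⱼ μᵢⱼ |aᵢ - bⱼ| |aᵢ + bⱼ|`, and Cauchy–Schwarz in
`L²(μ)` bounds this by `‖λ - λ'‖_F ‖λ + λ'‖_F`.
-/

open scoped Interval

variable {d : ℕ}

theorem frobNorm_nonneg (A : Matrix (Fin d) (Fin d) ℂ) : 0 ≤ frobNorm A :=
  Real.sqrt_nonneg _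

theorem frobNorm_sq_eq_sum (A : Matrix (Fin d) (Fin d) ℂ) :
    frobNorm A ^ 2 = ∑ i, ∑ j, ‖A i j‖ ^ 2 := by
  have h : (Aᴴ * A).trace.re = ∑ i, ∑ j, ‖A i j‖ ^ 2 := by
    rw [Finset.sum_comm]
    simp [Matrix.trace, Matrix.mul_apply, Complex.re_sum, Complex.sq_norm,
      ← Complex.normSq_eq_conj_mul_self]
  rw [frobNorm, Real.sq_sqrt (h ▸ by positivity), h]

section Unitary

variable {U V : Matrix (Fin d) (Fin d) ℂ}
  (hU : U ∈ unitaryGroup (Fin d) ℂ) (hV : V ∈ unitaryGroup (Fin d) ℂ)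
include hU hV

theorem frobNorm_unitary_mul_mul (A : Matrix (Fin d) (Fin d) ℂ) :
    frobNorm (U * A * V) = frobNorm A := by
  have h : (U * A * V)ᴴ * (U * A * V) = Vᴴ * (Aᴴ * A) * V := by
    have hU' : Uᴴ * U = 1 := mem_unitaryGroup_iff'.mp hU
    simp only [conjTranspose_mul, mul_assoc]
    rw [← mul_assoc Uᴴ, hU', one_mul]
  have hV' : V * Vᴴ = 1 := mem_unitaryGroup_iff.mp hV
  rw [frobNorm, frobNorm, h, trace_mul_cycle, ← mul_assoc, hV', one_mul]

theorem frobNorm_sq_conj_diagonal_sub (f g : Fin d → ℂ) :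
    frobNorm (U * diagonal f * star U - V * diagonal g * star V) ^ 2 =
      ∑ p : Fin d × Fin d, ‖(star U * V) p.1 p.2‖ ^ 2 * ‖f p.1 - g p.2‖ ^ 2 := by
  have h : star U * (U * diagonal f * star U - V * diagonal g * star V) * V =
      diagonal f * (star U * V) - (star U * V) * diagonal g := by
    simp only [Matrix.mul_sub, Matrix.sub_mul, ← mul_assoc, Unitary.star_mul_self_of_mem hU,
      one_mul]
    simp only [mul_assoc, Unitary.star_mul_self_of_mem hV, mul_one]
  rw [← frobNorm_unitary_mul_mul (Unitary.star_mem hU) hV, h, frobNorm_sq_eq_sum,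
    Fintype.sum_prod_type]
  refine Finset.sum_congr rfl fun i _ => Finset.sum_congr rfl fun j _ => ?_
  rw [Matrix.sub_apply, diagonal_mul, mul_diagonal, mul_comm (f i), ← mul_sub, norm_mul, mul_pow]

end Unitary

noncomputable def jointDistribution {A B : Matrix (Fin d) (Fin d) ℂ} (hA : A.IsHermitian)
    (hB : B.IsHermitian) (p : Fin d × Fin d) : ℝ :=
  ‖(star (hA.eigenvectorUnitary : Matrix (Fin d) (Fin d) ℂ) * hB.eigenvectorUnitary) p.1 p.2‖ ^ 2

section Hermitian

variable {A B : Matrix (Fin d) (Fin d) ℂ} (hA : A.IsHermitian) (hB : B.IsHermitian)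

theorem jointDistribution_nonneg (p : Fin d × Fin d) : 0 ≤ jointDistribution hA hB p := by
  unfold jointDistribution; positivity

theorem frobNorm_sq_specProj_sub (c : ℝ) :
    frobNorm (specProj hA c - specProj hB c) ^ 2 =
      ∑ p, jointDistribution hA hB p *
        ‖(if c ≤ hA.eigenvalues p.1 then (1 : ℂ) else 0) -
          (if c ≤ hB.eigenvalues p.2 then 1 else 0)‖ ^ 2 := by
  rw [specProj, specProj, frobNorm_sq_conj_diagonal_sub (SetLike.coe_mem _) (SetLike.coe_mem _)]
  rfl

theorem frobNorm_sq_sub_eq_sum :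
    frobNorm (A - B) ^ 2 =
      ∑ p, jointDistribution hA hB p * (hA.eigenvalues p.1 - hB.eigenvalues p.2) ^ 2 := by
  conv_lhs => rw [hA.spectral_theorem, hB.spectral_theorem]
  rw [Unitary.conjStarAlgAut_apply, Unitary.conjStarAlgAut_apply,
    frobNorm_sq_conj_diagonal_sub (SetLike.coe_mem _) (SetLike.coe_mem _)]
  refine Finset.sum_congr rfl fun p _ => ?_
  simp [jointDistribution, ← Complex.ofReal_sub, Complex.norm_real]

theorem frobNorm_sq_add_eq_sum :
    frobNorm (A + B) ^ 2 =
      ∑ p, jointDistribution hA hB p * (hA.eigenvalues p.1 + hB.eigenvalues p.2) ^ 2 := by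
  set U := (hA.eigenvectorUnitary : Matrix (Fin d) (Fin d) ℂ)
  set V := (hB.eigenvectorUnitary : Matrix (Fin d) (Fin d) ℂ)
  have h : A + B = U * Matrix.diagonal (RCLike.ofReal ∘ hA.eigenvalues) * star U -
      V * Matrix.diagonal (-(RCLike.ofReal ∘ hB.eigenvalues)) * star V := by
    conv_lhs => rw [hA.spectral_theorem, hB.spectral_theorem]
    rw [Unitary.conjStarAlgAut_apply, Unitary.conjStarAlgAut_apply, Pi.neg_def, ← diagonal_neg,
      Matrix.mul_neg, Matrix.neg_mul, sub_neg_eq_add]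
  rw [h, frobNorm_sq_conj_diagonal_sub (SetLike.coe_mem _) (SetLike.coe_mem _)]
  refine Finset.sum_congr rfl fun p _ => ?_
  simp [jointDistribution, ← Complex.ofReal_add, Complex.norm_real]

end Hermitian

theorem sq_norm_ite_sub_ite_eq_indicator {a b : ℝ} (ha : 0 ≤ a) (hb : 0 ≤ b) :
    (fun α : ℝ => ‖(if √α ≤ a then (1 : ℂ) else 0) - (if √α ≤ b then 1 else 0)‖ ^ 2) =
      (Ι (a ^ 2) (b ^ 2)).indicator 1 := by
  ext α
  simp only [Real.sqrt_le_left ha, Real.sqrt_le_left hb]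
  by_cases h1 : α ≤ a ^ 2 <;> by_cases h2 : α ≤ b ^ 2 <;>
    simp [h1, h2, Set.mem_uIoc, not_le.mp]

theorem integrableOn_sq_norm_ite_sub_ite {a b : ℝ} (ha : 0 ≤ a) (hb : 0 ≤ b) :
    IntegrableOn (fun α => ‖(if √α ≤ a then (1 : ℂ) else 0) - (if √α ≤ b then 1 else 0)‖ ^ 2)
      (Set.Ioi 0) := by
  rw [sq_norm_ite_sub_ite_eq_indicator ha hb]
  exact ((integrable_indicator_iff measurableSet_uIoc).2
    (integrableOn_const (by simp))).integrableOn

theorem integral_sq_norm_ite_sub_ite {a b : ℝ} (ha : 0 ≤ a) (hb : 0 ≤ b) :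
    ∫ α in Set.Ioi 0, ‖(if √α ≤ a then (1 : ℂ) else 0) - (if √α ≤ b then 1 else 0)‖ ^ 2 =
      |a - b| * |a + b| := by
  have hsub : Ι (a ^ 2) (b ^ 2) ⊆ Set.Ioi 0 := fun α hα =>
    lt_of_le_of_lt (le_min (sq_nonneg a) (sq_nonneg b)) hα.1
  rw [sq_norm_ite_sub_ite_eq_indicator ha hb, integral_indicator_one measurableSet_uIoc,
    measureReal_restrict_apply measurableSet_uIoc, Set.inter_eq_left.2 hsub, measureReal_def,
    Real.volume_uIoc, ENNReal.toReal_ofReal (abs_nonneg _), ← abs_mul, abs_sub_comm, sq_sub_sq,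
    mul_comm]

theorem sum_mul_abs_mul_abs_le {ι : Type*} (s : Finset ι) {w : ι → ℝ} (hw : ∀ i, 0 ≤ w i)
    (x y : ι → ℝ) :
    ∑ i ∈ s, w i * (|x i| * |y i|) ≤ √(∑ i ∈ s, w i * x i ^ 2) * √(∑ i ∈ s, w i * y i ^ 2) := by
  convert Real.sum_sqrt_mul_sqrt_le s (fun i => mul_nonneg (hw i) (sq_nonneg (x i)))
    (fun i => mul_nonneg (hw i) (sq_nonneg (y i))) using 2 with i
  rw [Real.sqrt_mul (hw i), Real.sqrt_mul (hw i), Real.sqrt_sq_eq_abs, Real.sqrt_sq_eq_abs,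
    mul_mul_mul_comm, Real.mul_self_sqrt (hw i)]

/-- Connes's joint distribution trick: for positive semidefinite `λ, λ'`,
`∫₀^∞ ‖χ_{≥√α}(λ) − χ_{≥√α}(λ')‖_F² dα ≤ ‖λ − λ'‖_F ‖λ + λ'‖_F`. -/
theorem stmt10 {d : ℕ} (L L' : Matrix (Fin d) (Fin d) ℂ)
    (hL : L.PosSemidef) (hL' : L'.PosSemidef) :
    ∫ α in Set.Ioi (0 : ℝ),
        (frobNorm (specProj hL.1 (Real.sqrt α) - specProj hL'.1 (Real.sqrt α))) ^ 2 ≤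
      frobNorm (L - L') * frobNorm (L + L') := by
  set a := hL.1.eigenvalues
  set b := hL'.1.eigenvalues
  have ha : ∀ i, 0 ≤ a i := hL.eigenvalues_nonneg
  have hb : ∀ j, 0 ≤ b j := hL'.eigenvalues_nonneg
  calc ∫ α in Set.Ioi 0, frobNorm (specProj hL.1 √α - specProj hL'.1 √α) ^ 2
      = ∑ p, jointDistribution hL.1 hL'.1 p * (|a p.1 - b p.2| * |a p.1 + b p.2|) := by
        simp_rw [frobNorm_sq_specProj_sub]
        rw [integral_finsetSum _ fun p _ =>
          (integrableOn_sq_norm_ite_sub_ite (ha p.1) (hb p.2)).const_mul _]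
        refine Finset.sum_congr rfl fun p _ => ?_
        rw [integral_const_mul, integral_sq_norm_ite_sub_ite (ha p.1) (hb p.2)]
    _ ≤ √(∑ p, jointDistribution hL.1 hL'.1 p * (a p.1 - b p.2) ^ 2) *
          √(∑ p, jointDistribution hL.1 hL'.1 p * (a p.1 + b p.2) ^ 2) :=
        sum_mul_abs_mul_abs_le _ (jointDistribution_nonneg _ _) _ _
    _ = frobNorm (L - L') * frobNorm (L + L') := by
        rw [← frobNorm_sq_sub_eq_sum, ← frobNorm_sq_add_eq_sum, Real.sqrt_sq (frobNorm_nonneg _),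
          Real.sqrt_sq (frobNorm_nonneg _)]
end
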